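/- arXiv:2410.18592 — 4 statements merged into one kernel-verified Lean document; each statement's English description precedes it below -/
import Mathlib

section
/- Let $\mathcal{A}$ be an order-$m$, dimension-$n$ complex tensor and let $x=(x_1,\dots,x_n)$ be a vector with all $x_i > 0$. Then for every $i$, $\sum_{\delta_{i i_2\cdots i_m}=0} |a_{i i_2\cdots i_m}| x_{i_2}\cdots x_{i_m} \le \sum_{j=1}^{n} s_{ij}(\mathcal{A})\, x_j^{m-1}$. -/
open Finset

noncomputable def tDiag {n k : ℕ} (A : Fin n → (Fin k → Fin n) → ℂ) (i : Fin n) : ℝ :=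
  ‖A i (fun _ => i)‖

noncomputable def tRow {n k : ℕ} (A : Fin n → (Fin k → Fin n) → ℂ) (i : Fin n) : ℝ :=
  ∑ α ∈ univ.filter (fun α : Fin k → Fin n => α ≠ fun _ => i), ‖A i α‖

noncomputable def tS {n k : ℕ} (A : Fin n → (Fin k → Fin n) → ℂ) (i j : Fin n) : ℝ :=
  (1 / (k : ℝ)) * ∑ t : Fin k,
    ∑ α ∈ univ.filter (fun α : Fin k → Fin n => α t = j ∧ α ≠ fun _ => i),
      ‖A i α‖

noncomputable def tP {n k : ℕ} (A : Fin n → (Fin k → Fin n) → ℂ) (i : Fin n) : ℝ :=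
  ∑ j ∈ univ.erase i, tS A i j

noncomputable def tQ {n k : ℕ} (A : Fin n → (Fin k → Fin n) → ℂ) (i : Fin n) : ℝ :=
  ∑ j ∈ univ.erase i, tS A j i

def IsHTensor {n k : ℕ} (A : Fin n → (Fin k → Fin n) → ℂ) : Prop :=
  ∃ y : Fin n → ℝ, (∀ i, 0 < y i) ∧ ∀ i,
    (∑ α ∈ univ.filter (fun α : Fin k → Fin n => α ≠ fun _ => i),
        ‖A i α‖ * ∏ t, y (α t)) < tDiag A i * y i ^ k

def IsHEig {n k : ℕ} (A : Fin n → (Fin k → Fin n) → ℂ) (lam : ℝ) : Prop :=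
  ∃ x : Fin n → ℝ, x ≠ 0 ∧ ∀ i,
    (∑ α : Fin k → Fin n, A i α * ∏ t, (x (α t) : ℂ)) = (lam : ℂ) * (x i : ℂ) ^ k

/-!
AM-GM bounds each monomial: `x (α 0) ⋯ x (α (k-1)) ≤ (1/k) ∑ₜ x (α t) ^ k`. Multiplying by `‖A i α‖`,
summing over the off-diagonal `α`, and regrouping the terms `x (α t) ^ k` according to the value
`j = α t` gives exactly `∑ⱼ tS A i j * x j ^ k`.
-/

theorem Real.prod_le_inv_card_mul_sum_pow {ι : Type*} [Fintype ι] [Nonempty ι] {z : ι → ℝ}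
    (hz : ∀ i, 0 ≤ z i) : ∏ i, z i ≤ (Fintype.card ι : ℝ)⁻¹ * ∑ i, z i ^ Fintype.card ι := by
  set N := Fintype.card ι
  have hN : (N : ℝ) ≠ 0 := Nat.cast_ne_zero.2 Fintype.card_ne_zero
  calc ∏ i, z i = ∏ i, (z i ^ N) ^ (N⁻¹ : ℝ) :=
        prod_congr rfl fun i _ => (Real.pow_rpow_inv_natCast (hz i) Fintype.card_ne_zero).symm
    _ ≤ ∑ i, (N : ℝ)⁻¹ * z i ^ N :=
        Real.geom_mean_le_arith_mean_weighted _ _ _ (fun _ _ => by positivity)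
          (by simp [N, hN]) (fun i _ => pow_nonneg (hz i) N)
    _ = (N : ℝ)⁻¹ * ∑ i, z i ^ N := (mul_sum _ _ _).symm

theorem sum_tS_mul_pow {n k : ℕ} (A : Fin n → (Fin k → Fin n) → ℂ) (x : Fin n → ℝ) (i : Fin n) :
    ∑ j, tS A i j * x j ^ k = (1 / (k : ℝ)) *
      ∑ α ∈ univ.filter (fun α : Fin k → Fin n => α ≠ fun _ => i),
        ‖A i α‖ * ∑ t, x (α t) ^ k := by
  have fiber (t : Fin k) :
      ∑ j, ∑ α ∈ univ.filter (fun α : Fin k → Fin n => α t = j ∧ α ≠ fun _ => i),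
        ‖A i α‖ * x j ^ k =
      ∑ α ∈ univ.filter (fun α : Fin k → Fin n => α ≠ fun _ => i), ‖A i α‖ * x (α t) ^ k := by
    rw [← sum_fiberwise _ (fun α : Fin k → Fin n => α t)]
    refine sum_congr rfl fun j _ => ?_
    rw [filter_filter]
    refine sum_congr (filter_congr fun α _ => and_comm) fun α hα => ?_
    rw [(mem_filter.1 hα).2.2]
  simp only [tS, mul_assoc, sum_mul, ← mul_sum]
  rw [sum_comm]
  simp only [fiber, mul_sum]
  rw [sum_comm]

theorem stmt2 {n k : ℕ} (hk : 1 ≤ k) (A : Fin n → (Fin k → Fin n) → ℂ)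
    (x : Fin n → ℝ) (hx : ∀ i, 0 < x i) (i : Fin n) :
    (∑ α ∈ univ.filter (fun α : Fin k → Fin n => α ≠ fun _ => i),
        ‖A i α‖ * ∏ t, x (α t)) ≤ ∑ j, tS A i j * x j ^ k := by
  have : NeZero k := ⟨by omega⟩
  rw [sum_tS_mul_pow, mul_sum]
  refine sum_le_sum fun α _ => ?_
  calc ‖A i α‖ * ∏ t, x (α t)
      ≤ ‖A i α‖ * ((k : ℝ)⁻¹ * ∑ t, x (α t) ^ k) := by
        gcongr
        simpa only [Fintype.card_fin] using
          Real.prod_le_inv_card_mul_sum_pow (z := fun t : Fin k => x (α t)) fun t => (hx _).le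
    _ = 1 / (k : ℝ) * (‖A i α‖ * ∑ t, x (α t) ^ k) := by ring
end

section
/- Let $\mathcal{A} \in \mathbb{C}^{[m\times n]}$ with tensor-generated matrix $A$, and let $\gamma \in [0,1]$. If $A$ is strictly product $\gamma$-diagonally dominant—that is, $|a_{i\cdots i}|-s_{ii}(\mathcal{A}) > (P_i(A))^{\gamma}(Q_i(A))^{1-\gamma}$ for all $i$, where $P_i(A)=\sum_{j\ne i} s_{ij}(\mathcal{A})$ and $Q_i(A)=\sum_{j\ne i} s_{ji}(\mathcal{A})$—then $\mathcal{A}$ is an $H$-tensor. -/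
open Finset

/-!
Write `c i = |a_{i⋯i}| - s_{ii}` and `S = (s_{ij})`, so that the hypothesis says the comparison
matrix `M` with diagonal `c` and off-diagonal entries `-s_{ij}` is strictly product
`γ`-diagonally dominant. By Ville's theorem of the alternative, either some `z ≥ 0` has `M z > 0`,
or some nonzero `x ≥ 0` has `xᵀ M ≤ 0`. The second case is impossible: for `γ > 0`, Hölder's
inequality with exponent `1/γ` on the columns of `S` gives `P_j x_j^{1/γ} < ∑_i s_{ij} x_i^{1/γ}`
wherever `x_j > 0`, and summing over `j` counts the same double sum on both sides; for `γ = 0`,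
look at a largest entry of `x`. A vector `z ≥ 0` with `M z > 0` is automatically positive.

Then `y = z^{1/k}` certifies that `𝓐` is an `H`-tensor: by AM–GM,
`∏_t y_{i_t} ≤ (1/k) ∑_t z_{i_t}`, and regrouping the multi-indices by their entries turns
`∑_α |a_{iα}| (1/k) ∑_t z_{α_t}` into `∑_j s_{ij} z_j < |a_{i⋯i}| z_i`.
-/

open Matrix

/-- Ville's theorem of the alternative, via a Hahn–Banach separation of the open positive orthant
from the convex cone `M *ᵥ {z | 0 ≤ z}`. -/
theorem Matrix.exists_nonneg_mulVec_pos {m ι : Type*} [Fintype m] [Fintype ι] (M : Matrix m ι ℝ)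
    (h : ∀ x : m → ℝ, 0 ≤ x → x ᵥ* M ≤ 0 → x = 0) :
    ∃ z, 0 ≤ z ∧ ∀ i, 0 < (M *ᵥ z) i := by
  classical
  by_contra! hM
  let s : Set (m → ℝ) := Set.univ.pi fun _ => Set.Ioi 0
  have hs : IsOpen s := isOpen_set_pi Set.finite_univ fun _ _ => isOpen_Ioi
  have hst : Disjoint s (M.mulVecLin '' Set.Ici 0) := by
    rw [Set.disjoint_right]
    rintro _ ⟨z, hz, rfl⟩ hzs
    obtain ⟨i, hi⟩ := hM z hz
    exact hi.not_gt (hzs i (Set.mem_univ i))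
  obtain ⟨f, u, hfs, hft⟩ := geometric_hahn_banach_open (convex_pi fun _ _ => convex_Ioi 0) hs
    ((convex_Ici 0).linear_image _) hst
  have hu : u ≤ 0 := by simpa using hft 0 ⟨0, Set.mem_Ici.2 le_rfl, map_zero _⟩
  let w : m → ℝ := fun i => f (Pi.single i 1)
  have hfw : ∀ p, f p = w ⬝ᵥ p := fun p => by
    conv_lhs => rw [← univ_sum_single p]
    refine (map_sum f _ _).trans (sum_congr rfl fun i _ => ?_)
    have : Pi.single i (p i) = p i • Pi.single i (1 : ℝ) := by
      rw [← Pi.single_smul', smul_eq_mul, mul_one]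
    rw [this, map_smul, smul_eq_mul, mul_comm]
  have hw : w ≤ 0 := fun i => by
    have hcl : closure s ⊆ {p | f p ≤ u} :=
      closure_minimal (fun p hp => (hfs p hp).le) (isClosed_le f.continuous continuous_const)
    refine (hcl ?_).trans hu
    rw [closure_pi_set]
    intro j _
    rw [closure_Ioi, Set.mem_Ici]
    exact (Pi.single_nonneg (α := fun _ => ℝ)).2 zero_le_one j
  have hwM : 0 ≤ w ᵥ* M := fun j => by
    by_contra! hj
    have hr : 0 ≤ (u - 1) / (w ᵥ* M) j := div_nonneg_of_nonpos (by linarith) hj.le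
    have := hft _ ⟨((u - 1) / (w ᵥ* M) j) • Pi.single j 1, Set.mem_Ici.2 <| smul_nonneg hr
      (Pi.single_nonneg.2 zero_le_one), rfl⟩
    rw [hfw, mulVecLin_apply, mulVec_smul, dotProduct_smul, dotProduct_mulVec, dotProduct_single,
      smul_eq_mul, mul_one, div_mul_cancel₀ _ hj.ne] at this
    linarith
  have hw0 : w = 0 := neg_eq_zero.1 <| h (-w) (neg_nonneg.2 hw) (by simpa [neg_vecMul] using hwM)
  have := hfs 1 fun i _ => by simp
  simp [hfw, hw0] at this
  linarith

theorem Real.prod_rpow_inv_card_le_mean {ι : Type*} [Fintype ι] [Nonempty ι] (z : ι → ℝ)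
    (hz : 0 ≤ z) :
    ∏ t, z t ^ (Fintype.card ι : ℝ)⁻¹ ≤ (Fintype.card ι : ℝ)⁻¹ * ∑ t, z t := by
  rw [mul_sum]
  exact Real.geom_mean_le_arith_mean_weighted univ _ z (fun _ _ => by positivity)
    (by simp [Fintype.card_ne_zero]) fun t _ => hz t

section ComparisonMatrix

variable {ι : Type*} [Fintype ι] [DecidableEq ι]

lemma sum_sum_erase_comm (f : ι → ι → ℝ) :
    ∑ i, ∑ j ∈ univ.erase i, f i j = ∑ j, ∑ i ∈ univ.erase j, f i j :=
  sum_comm' (by simp [ne_comm])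

def offDiagRowSum (S : ι → ι → ℝ) (i : ι) : ℝ := ∑ j ∈ univ.erase i, S i j

def offDiagColSum (S : ι → ι → ℝ) (i : ι) : ℝ := ∑ j ∈ univ.erase i, S j i

/- Below, `c` stands for the moduli of the diagonal entries and `S` for those of the off-diagonal
ones; the diagonal of `S` is ignored. -/

def comparisonMatrix (c : ι → ℝ) (S : ι → ι → ℝ) : Matrix ι ι ℝ :=
  Matrix.of fun i j => if i = j then c i else -S i j

def IsStrictProductDiagDominant (γ : ℝ) (c : ι → ℝ) (S : ι → ι → ℝ) : Prop :=
  ∀ i, offDiagRowSum S i ^ γ * offDiagColSum S i ^ (1 - γ) < c i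

def IsGenStrictDiagDominant (c : ι → ℝ) (S : ι → ι → ℝ) : Prop :=
  ∃ z : ι → ℝ, (∀ i, 0 < z i) ∧ ∀ i, ∑ j ∈ univ.erase i, S i j * z j < c i * z i

lemma comparisonMatrix_mulVec_apply (c : ι → ℝ) (S : ι → ι → ℝ) (z : ι → ℝ) (i : ι) :
    (comparisonMatrix c S *ᵥ z) i = c i * z i - ∑ j ∈ univ.erase i, S i j * z j := by
  simp only [mulVec, dotProduct, comparisonMatrix, of_apply]
  rw [← add_sum_erase _ _ (mem_univ i), if_pos rfl, sub_eq_add_neg, ← sum_neg_distrib]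
  exact congrArg _ (sum_congr rfl fun j hj => by simp [(ne_of_mem_erase hj).symm])

lemma vecMul_comparisonMatrix_apply (c : ι → ℝ) (S : ι → ι → ℝ) (x : ι → ℝ) (j : ι) :
    (x ᵥ* comparisonMatrix c S) j = c j * x j - ∑ i ∈ univ.erase j, S i j * x i := by
  simp only [vecMul, dotProduct, comparisonMatrix, of_apply]
  rw [← add_sum_erase _ _ (mem_univ j), if_pos rfl, sub_eq_add_neg, ← sum_neg_distrib, mul_comm]
  exact congrArg _ (sum_congr rfl fun i hi => by simp [ne_of_mem_erase hi, mul_comm])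

variable {S : ι → ι → ℝ} {c x : ι → ℝ}

lemma eq_zero_of_le_offDiag_of_colSum_lt (hS : ∀ i j, 0 ≤ S i j)
    (hQ : ∀ j, offDiagColSum S j < c j) (hx : 0 ≤ x)
    (hxS : ∀ j, c j * x j ≤ ∑ i ∈ univ.erase j, S i j * x i) : x = 0 := by
  refine le_antisymm (fun j => ?_) hx
  obtain ⟨j', -, hmax⟩ := exists_max_image univ x ⟨j, mem_univ j⟩
  suffices x j' ≤ 0 from (hmax j (mem_univ j)).trans this
  by_contra! hxj
  have : ∑ i ∈ univ.erase j', S i j' * x i ≤ offDiagColSum S j' * x j' := by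
    rw [offDiagColSum, sum_mul]
    exact sum_le_sum fun i _ => mul_le_mul_of_nonneg_left (hmax i (mem_univ i)) (hS i j')
  nlinarith [hxS j', hQ j']

lemma eq_zero_of_le_offDiag_of_rpow_mul_rpow_lt {γ : ℝ} (hγ0 : 0 < γ) (hγ1 : γ ≤ 1)
    (hS : ∀ i j, 0 ≤ S i j) (hdom : IsStrictProductDiagDominant γ c S) (hx : 0 ≤ x)
    (hxS : ∀ j, c j * x j ≤ ∑ i ∈ univ.erase j, S i j * x i) : x = 0 := by
  set u : ι → ℝ := fun i => x i ^ γ⁻¹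
  have hu : ∀ i, 0 ≤ u i := fun i => Real.rpow_nonneg (hx i) _
  have hux : ∀ i, u i ^ γ = x i := fun i => Real.rpow_inv_rpow (hx i) hγ0.ne'
  have hSu : ∀ j, 0 ≤ ∑ i ∈ univ.erase j, S i j * u i :=
    fun j => sum_nonneg fun i _ => mul_nonneg (hS i j) (hu i)
  have key : ∀ j, 0 < x j → offDiagRowSum S j * u j < ∑ i ∈ univ.erase j, S i j * u i := by
    intro j hxj
    have hP : 0 ≤ offDiagRowSum S j := sum_nonneg fun i _ => hS j i
    have holder := Real.inner_le_weight_mul_Lp_of_nonneg (univ.erase j)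
      (one_le_inv_iff₀.2 ⟨hγ0, hγ1⟩) (S · j) x (hS · j) hx
    rw [inv_inv] at holder
    have : (offDiagRowSum S j * u j) ^ γ * offDiagColSum S j ^ (1 - γ) <
        (∑ i ∈ univ.erase j, S i j * u i) ^ γ * offDiagColSum S j ^ (1 - γ) := by
      rw [Real.mul_rpow hP (hu j), hux, mul_right_comm]
      calc _ < c j * x j := mul_lt_mul_of_pos_right (hdom j) hxj
        _ ≤ _ := (hxS j).trans holder
        _ = _ := mul_comm _ _
    exact (Real.rpow_lt_rpow_iff (mul_nonneg hP (hu j)) (hSu j) hγ0).1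
      (lt_of_mul_lt_mul_right this (Real.rpow_nonneg (sum_nonneg fun i _ => hS i j) _))
  by_contra hne
  obtain ⟨j₀, hj₀⟩ : ∃ j, 0 < x j := by
    by_contra! h
    exact hne (le_antisymm h hx)
  have hlt : ∑ j, offDiagRowSum S j * u j < ∑ j, ∑ i ∈ univ.erase j, S i j * u i := by
    refine sum_lt_sum (fun j _ => ?_) ⟨j₀, mem_univ _, key j₀ hj₀⟩
    rcases (hx j).lt_or_eq with hxj | hxj
    · exact (key j hxj).le
    · rw [show u j = 0 by simp [u, ← hxj, Real.zero_rpow (inv_ne_zero hγ0.ne')], mul_zero]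
      exact hSu j
  rw [← sum_sum_erase_comm] at hlt
  simp only [offDiagRowSum, sum_mul] at hlt
  exact hlt.false

namespace IsStrictProductDiagDominant

variable {γ : ℝ}

lemma eq_zero_of_vecMul_nonpos (h : IsStrictProductDiagDominant γ c S) (hS : ∀ i j, 0 ≤ S i j)
    (hγ0 : 0 ≤ γ) (hγ1 : γ ≤ 1) (hx : 0 ≤ x) (hxM : x ᵥ* comparisonMatrix c S ≤ 0) : x = 0 := by
  have hxS : ∀ j, c j * x j ≤ ∑ i ∈ univ.erase j, S i j * x i := fun j =>
    sub_nonpos.1 (vecMul_comparisonMatrix_apply c S x j ▸ hxM j)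
  rcases hγ0.eq_or_lt with rfl | hγ
  · exact eq_zero_of_le_offDiag_of_colSum_lt hS (fun j => by simpa using h j) hx hxS
  · exact eq_zero_of_le_offDiag_of_rpow_mul_rpow_lt hγ hγ1 hS h hx hxS

theorem isGenStrictDiagDominant (h : IsStrictProductDiagDominant γ c S) (hS : ∀ i j, 0 ≤ S i j)
    (hγ0 : 0 ≤ γ) (hγ1 : γ ≤ 1) : IsGenStrictDiagDominant c S := by
  obtain ⟨z, hz, hMz⟩ := (comparisonMatrix c S).exists_nonneg_mulVec_pos
    fun x hx hxM => h.eq_zero_of_vecMul_nonpos hS hγ0 hγ1 hx hxM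
  have hzS : ∀ i, ∑ j ∈ univ.erase i, S i j * z j < c i * z i := fun i =>
    sub_pos.1 (comparisonMatrix_mulVec_apply c S z i ▸ hMz i)
  refine ⟨z, fun i => (hz i).lt_of_ne fun hzi => ?_, hzS⟩
  have := hzS i
  rw [← hzi, Pi.zero_apply, mul_zero] at this
  exact this.not_ge (sum_nonneg fun j _ => mul_nonneg (hS i j) (hz j))

end IsStrictProductDiagDominant

end ComparisonMatrix

lemma tS_nonneg {n k : ℕ} (A : Fin n → (Fin k → Fin n) → ℂ) (i j : Fin n) : 0 ≤ tS A i j := by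
  unfold tS
  positivity

lemma sum_tS_mul {n k : ℕ} (A : Fin n → (Fin k → Fin n) → ℂ) (i : Fin n) (z : Fin n → ℝ) :
    ∑ j, tS A i j * z j = ∑ α ∈ univ.filter (fun α : Fin k → Fin n => α ≠ fun _ => i),
      ‖A i α‖ * ((k : ℝ)⁻¹ * ∑ t, z (α t)) := by
  set F := univ.filter (fun α : Fin k → Fin n => α ≠ fun _ => i)
  have fiber : ∀ t : Fin k,
      ∑ j, ∑ α ∈ univ.filter (fun α : Fin k → Fin n => α t = j ∧ α ≠ fun _ => i),
        ‖A i α‖ * z j = ∑ α ∈ F, ‖A i α‖ * z (α t) := by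
    intro t
    rw [← sum_fiberwise F (fun α => α t)]
    refine sum_congr rfl fun j _ => ?_
    rw [filter_filter]
    exact sum_congr (by simp [and_comm]) fun α hα => by rw [(mem_filter.1 hα).2.2]
  simp only [tS, one_div, mul_assoc, mul_left_comm _ ((k : ℝ)⁻¹), ← mul_sum, sum_mul]
  simp_rw [sum_comm (γ := Fin n), fiber, mul_sum]
  exact sum_comm

theorem stmt9 {n k : ℕ} (hk : 1 ≤ k) (A : Fin n → (Fin k → Fin n) → ℂ)
    (γ : ℝ) (hγ : γ ∈ Set.Icc (0:ℝ) 1)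
    (hDD : ∀ i : Fin n, tP A i ^ γ * tQ A i ^ (1 - γ) < tDiag A i - tS A i i) :
    IsHTensor A := by
  obtain ⟨hγ0, hγ1⟩ := hγ
  have hk0 : k ≠ 0 := Nat.one_le_iff_ne_zero.1 hk
  have : NeZero k := ⟨hk0⟩
  obtain ⟨z, hz, hzS⟩ :=
    IsStrictProductDiagDominant.isGenStrictDiagDominant hDD (tS_nonneg A) hγ0 hγ1
  refine ⟨fun j => z j ^ (k : ℝ)⁻¹, fun j => Real.rpow_pos_of_pos (hz j) _, fun i => ?_⟩
  have amgm (α : Fin k → Fin n) : ∏ t, z (α t) ^ (k : ℝ)⁻¹ ≤ (k : ℝ)⁻¹ * ∑ t, z (α t) := by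
    simpa using Real.prod_rpow_inv_card_le_mean (z ∘ α) fun t => (hz (α t)).le
  calc _ ≤ ∑ α ∈ univ.filter (fun α : Fin k → Fin n => α ≠ fun _ => i),
          ‖A i α‖ * ((k : ℝ)⁻¹ * ∑ t, z (α t)) :=
        sum_le_sum fun α _ => mul_le_mul_of_nonneg_left (amgm α) (norm_nonneg _)
    _ = tS A i i * z i + ∑ j ∈ univ.erase i, tS A i j * z j := by
        rw [← sum_tS_mul]
        exact (add_sum_erase _ _ (mem_univ i)).symm
    _ < tDiag A i * z i := by linarith [hzS i]
    _ = tDiag A i * (z i ^ (k : ℝ)⁻¹) ^ k := by rw [Real.rpow_inv_natCast_pow (hz i).le hk0]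
end

section
/- A strictly $S$-diagonally dominant complex matrix is a nonsingular $H$-matrix: if $A \in \mathbb{C}^{n\times n}$, $\emptyset \ne S \subsetneq \{1,\dots,n\}$, satisfies $|a_{ii}| > r_i^S(A)$ for all $i \in S$ and $(|a_{ii}| - r_i^S(A))(|a_{jj}| - r_j^{\overline{S}}(A)) > r_i^{\overline{S}}(A)\, r_j^S(A)$ for all $i \in S$, $j \in \overline{S}$, then there exists a positive diagonal matrix $D$ such that $AD$ is strictly diagonally dominant. -/
/-!
Take `d = γ` on `S` and `d = 1` off `S`. Row `i ∈ S` of `A D` is then strictly dominant iff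
`r_i^{S̄} < γ (|a_ii| - r_i^S)`, and row `j ∉ S` iff `γ r_j^S < |a_jj| - r_j^{S̄}`. The second
hypothesis says precisely that each of the lower bounds on `γ` lies below each of the upper ones,
so a common `γ > 0` exists.
-/

open Finset Filter Topology

/-- Find `γ` just above `max_{i ∈ s} b i / a i`: the strict inequalities `γ * p j < q j`, which hold
at the maximum itself, survive a small increase of `γ`. -/
theorem exists_pos_lt_mul_and_mul_lt {ι : Type*} {s t : Finset ι} (hs : s.Nonempty)
    {a b p q : ι → ℝ} (ha : ∀ i ∈ s, 0 < a i) (hb : ∀ i ∈ s, 0 ≤ b i)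
    (h : ∀ i ∈ s, ∀ j ∈ t, b i * p j < a i * q j) :
    ∃ γ, 0 < γ ∧ (∀ i ∈ s, b i < γ * a i) ∧ ∀ j ∈ t, γ * p j < q j := by
  obtain ⟨k, hk, hαk⟩ := s.exists_mem_eq_sup' hs fun i => b i / a i
  set α := s.sup' hs fun i => b i / a i
  have hα_nonneg : 0 ≤ α := hαk ▸ div_nonneg (hb k hk) (ha k hk).le
  have hb_le : ∀ i ∈ s, b i ≤ α * a i := fun i hi =>
    (div_le_iff₀ (ha i hi)).1 (s.le_sup' (fun i => b i / a i) hi)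
  have hαt : ∀ j ∈ t, α * p j < q j := fun j hj => by
    rw [hαk, div_mul_eq_mul_div, div_lt_iff₀ (ha k hk), mul_comm (q j)]
    exact h k hk j hj
  have hgt : ∀ᶠ γ in 𝓝[>] α, α < γ := self_mem_nhdsWithin
  have hlt : ∀ᶠ γ in 𝓝[>] α, ∀ j ∈ t, γ * p j < q j :=
    (eventually_all_finset t).2 fun j hj => nhdsWithin_le_nhds <|
      ((continuous_mul_const (p j)).tendsto α).eventually_lt_const (hαt j hj)
  obtain ⟨γ, hαγ, hγt⟩ := (hgt.and hlt).exists
  refine ⟨γ, hα_nonneg.trans_lt hαγ, fun i hi => ?_, hγt⟩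
  exact (hb_le i hi).trans_lt (mul_lt_mul_of_pos_right hαγ (ha i hi))

theorem sum_erase_mul_ite_mem {ι R : Type*} [Fintype ι] [DecidableEq ι] [NonAssocSemiring R]
    (S : Finset ι) (w : ι → R) (γ : R) (i : ι) :
    ∑ j ∈ univ.erase i, w j * (if j ∈ S then γ else 1) =
      (∑ j ∈ S.erase i, w j) * γ + ∑ j ∈ Sᶜ.erase i, w j := by
  rw [← sum_filter_add_sum_filter_not _ (· ∈ S), sum_mul]
  congr 1
  · refine sum_congr (by ext; simp [and_comm]) fun j hj => ?_
    simp [(mem_erase.1 hj).2]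
  · refine sum_congr (by ext; simp [and_comm]) fun j hj => ?_
    simp [mem_compl.1 (mem_erase.1 hj).2]

theorem stmt16_general {n : ℕ} (A : Matrix (Fin n) (Fin n) ℂ)
    (S : Finset (Fin n)) (hS : S.Nonempty)
    (h1 : ∀ i ∈ S, ∑ j ∈ S.erase i, ‖A i j‖ < ‖A i i‖)
    (h2 : ∀ i ∈ S, ∀ j ∈ Sᶜ,
      (∑ l ∈ Sᶜ.erase i, ‖A i l‖) * (∑ l ∈ S.erase j, ‖A j l‖) <
        (‖A i i‖ - ∑ l ∈ S.erase i, ‖A i l‖) *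
          (‖A j j‖ - ∑ l ∈ Sᶜ.erase j, ‖A j l‖)) :
    ∃ d : Fin n → ℝ, (∀ i, 0 < d i) ∧ ∀ i,
      (∑ j ∈ univ.erase i, ‖A i j‖ * d j) < ‖A i i‖ * d i := by
  obtain ⟨γ, hγ, hS_row, hSc_row⟩ := exists_pos_lt_mul_and_mul_lt hS
    (fun i hi => sub_pos.2 (h1 i hi)) (fun i _ => sum_nonneg fun l _ => norm_nonneg (A i l)) h2
  refine ⟨fun j => if j ∈ S then γ else 1,
    fun j => by dsimp only; split_ifs <;> positivity, fun i => ?_⟩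
  rw [sum_erase_mul_ite_mem]
  by_cases hi : i ∈ S
  · simp only [hi, if_true]
    linarith [hS_row i hi]
  · simp only [hi, if_false]
    linarith [hSc_row i (mem_compl.2 hi)]

theorem stmt16 {n : ℕ} (A : Matrix (Fin n) (Fin n) ℂ)
    (S : Finset (Fin n)) (hS : S.Nonempty) (hS' : S ≠ univ)
    (h1 : ∀ i ∈ S, ∑ j ∈ S.erase i, ‖A i j‖ < ‖A i i‖)
    (h2 : ∀ i ∈ S, ∀ j ∈ Sᶜ,
      (∑ l ∈ Sᶜ.erase i, ‖A i l‖) * (∑ l ∈ S.erase j, ‖A j l‖) <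
        (‖A i i‖ - ∑ l ∈ S.erase i, ‖A i l‖) *
          (‖A j j‖ - ∑ l ∈ Sᶜ.erase j, ‖A j l‖)) :
    ∃ d : Fin n → ℝ, (∀ i, 0 < d i) ∧ ∀ i,
      (∑ j ∈ univ.erase i, ‖A i j‖ * d j) < ‖A i i‖ * d i :=
  stmt16_general A S hS h1 h2
end

section
/- If $\mathcal{A}$ is an $H$-tensor, then $0$ is not an $H$-eigenvalue of $\mathcal{A}$: there is no nonzero real vector $x$ with $\mathcal{A}x^{m-1} = 0$. -/
open Finset

/-! Suppose `x ≠ 0` and `A x^k = 0`. Pick `i` maximising `|x i| / y i =: c`, so that `|x| ≤ c • y`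
with equality at `i`. The `i`-th equation bounds the diagonal term `‖A i (fun _ => i)‖ * |x i| ^ k`
by the off-diagonal sum at `|x|`, which is at most `c ^ k` times the off-diagonal sum at `y`; the
`H`-tensor inequality makes the latter strictly smaller than `c ^ k * ‖A i (fun _ => i)‖ * y i ^ k`,
which is the diagonal term itself. -/

lemma exists_abs_le_mul_of_ne_zero {ι : Type*} [Fintype ι] {x y : ι → ℝ} (hx : x ≠ 0)
    (hy : ∀ j, 0 < y j) :
    ∃ i c, 0 < c ∧ |x i| = c * y i ∧ ∀ j, |x j| ≤ c * y j := by
  obtain ⟨j₀, hj₀⟩ := Function.ne_iff.mp hx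
  obtain ⟨i, -, hi⟩ := exists_max_image univ (fun j => |x j| / y j) ⟨j₀, mem_univ j₀⟩
  refine ⟨i, |x i| / y i, ?_, (div_mul_cancel₀ _ (hy i).ne').symm, fun j => ?_⟩
  · exact (div_pos (abs_pos.mpr hj₀) (hy j₀)).trans_le (hi j₀ (mem_univ _))
  · exact (div_le_iff₀ (hy j)).mp (hi j (mem_univ j))

lemma norm_diag_mul_pow_le_of_sum_eq_zero {n k : ℕ} (A : Fin n → (Fin k → Fin n) → ℂ)
    (x : Fin n → ℝ) (i : Fin n) (h : ∑ α : Fin k → Fin n, A i α * ∏ t, (x (α t) : ℂ) = 0) :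
    tDiag A i * |x i| ^ k ≤
      ∑ α ∈ univ.filter (fun α : Fin k → Fin n => α ≠ fun _ => i), ‖A i α‖ * ∏ t, |x (α t)| := by
  rw [← add_sum_erase _ _ (mem_univ fun _ => i), prod_const, card_univ, Fintype.card_fin,
    add_eq_zero_iff_eq_neg] at h
  calc tDiag A i * |x i| ^ k = ‖A i (fun _ => i) * (x i : ℂ) ^ k‖ := by
        rw [tDiag, norm_mul, norm_pow, Complex.norm_real, Real.norm_eq_abs]
    _ ≤ ∑ α ∈ univ.erase (fun _ => i), ‖A i α * ∏ t, (x (α t) : ℂ)‖ := by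
        rw [h, norm_neg]; exact norm_sum_le _ _
    _ = _ := by
        rw [filter_ne']
        refine sum_congr rfl fun α _ => ?_
        simp only [norm_mul, norm_prod, Complex.norm_real, Real.norm_eq_abs]

lemma sum_mul_prod_le_pow_mul {ι : Type*} {k : ℕ} (s : Finset (Fin k → ι)) (w : (Fin k → ι) → ℝ)
    (hw : ∀ α, 0 ≤ w α) {x y : ι → ℝ} {c : ℝ} (hxy : ∀ j, |x j| ≤ c * y j) :
    ∑ α ∈ s, w α * ∏ t, |x (α t)| ≤ c ^ k * ∑ α ∈ s, w α * ∏ t, y (α t) := by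
  rw [mul_sum]
  refine sum_le_sum fun α _ => ?_
  calc w α * ∏ t, |x (α t)| ≤ w α * ∏ t, (c * y (α t)) :=
        mul_le_mul_of_nonneg_left
          (prod_le_prod (fun t _ => abs_nonneg _) fun t _ => hxy (α t)) (hw α)
    _ = c ^ k * (w α * ∏ t, y (α t)) := by
        rw [prod_mul_distrib, prod_const, card_univ, Fintype.card_fin]; ring

theorem stmt17_general {n k : ℕ} (A : Fin n → (Fin k → Fin n) → ℂ)
    (hH : IsHTensor A) :
    ¬ ∃ x : Fin n → ℝ, x ≠ 0 ∧ ∀ i,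
      (∑ α : Fin k → Fin n, A i α * ∏ t, (x (α t) : ℂ)) = 0 := by
  rintro ⟨x, hx, hAx⟩
  obtain ⟨y, hy, hHy⟩ := hH
  obtain ⟨i, c, hc, hxi, hxy⟩ := exists_abs_le_mul_of_ne_zero hx hy
  have hdiag := norm_diag_mul_pow_le_of_sum_eq_zero A x i (hAx i)
  have hoff := sum_mul_prod_le_pow_mul (univ.filter fun α => α ≠ fun _ => i)
    (fun α => ‖A i α‖) (fun _ => norm_nonneg _) hxy
  have hstrict := mul_lt_mul_of_pos_left (hHy i) (pow_pos hc k)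
  rw [hxi, mul_pow] at hdiag
  linarith

theorem stmt17 {n k : ℕ} (hk : 1 ≤ k) (A : Fin n → (Fin k → Fin n) → ℂ)
    (hH : IsHTensor A) :
    ¬ ∃ x : Fin n → ℝ, x ≠ 0 ∧ ∀ i,
      (∑ α : Fin k → Fin n, A i α * ∏ t, (x (α t) : ℂ)) = 0 :=
  stmt17_general A hH
end
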